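/- Let p be a prime, m a positive integer, k an integer with 1 ≤ k ≤ m−1, q = p^k, and let P = T(q,α,a,b) be a Taniguchi pre-semifield on F × F. Let p' be a p-primitive divisor of p^m − 1. Suppose the centralizer C of Z_R^{(q)} in Aut(P) contains Z^{(q)} as a subgroup of index I, where p' does not divide I. Then Z_R^{(q)} is a Sylow p'-subgroup of Aut(P). -/

import Mathlib

open scoped Classical
noncomputable section

abbrev GF (p m : ℕ) [Fact p.Prime] := GaloisField p m

/-- The Taniguchi multiplication `T(q,α,a,b)` on `F × F` where `F = F_{p^m}`. -/
def taniMul (p m : ℕ) [Fact p.Prime] (q : ℕ) (α a b : GF p m) :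
    GF p m × GF p m → GF p m × GF p m → GF p m × GF p m :=
  fun w z =>
    (w.1 ^ q * z.1 + α ^ q ^ 2 * w.1 * z.1 ^ q
       - a * (w.1 * z.2 ^ q - α ^ q * z.1 * w.2 ^ q)
       - b * (w.2 ^ q * z.2 + α * w.2 * z.2 ^ q),
     w.1 * z.2 ^ q ^ 2 + w.2 ^ q ^ 2 * z.1)

/-- Two multiplications on `F × F` are isotopic if there are `F_p`-linear bijections
`N, L, M` with `N (w ∘₁ z) = L w ∘₂ M z` for all `w, z`. -/
def Isotopic (p m : ℕ) [Fact p.Prime]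
    (mul1 mul2 : GF p m × GF p m → GF p m × GF p m → GF p m × GF p m) : Prop :=
  ∃ N L M : (GF p m × GF p m) ≃ₗ[ZMod p] GF p m × GF p m,
    ∀ w z, N (mul1 w z) = mul2 (L w) (M z)

/-- `p'` is a `p`-primitive divisor of `p^m - 1`. -/
def IsPrimitiveDivisor (p m p' : ℕ) : Prop :=
  p'.Prime ∧ p' ∣ p ^ m - 1 ∧ ∀ j : ℕ, 1 ≤ j → j < m → ¬ p' ∣ p ^ j - 1

/-- The Taniguchi pre-semifield conditions on the parameters. -/
def IsTaniguchiParam (p m : ℕ) [Fact p.Prime] (q : ℕ) (α a b : GF p m) : Prop :=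
  (¬ ∃ c : GF p m, -α = c ^ (q - 1)) ∧ ∀ x : GF p m, x ^ (q + 1) + a * x + b ≠ 0

/-- The group `GL_{F_p}(F×F)³` in which autotopism groups live. -/
abbrev G3 (p m : ℕ) [Fact p.Prime] :=
  ((GF p m × GF p m) ≃ₗ[ZMod p] GF p m × GF p m) ×
    ((GF p m × GF p m) ≃ₗ[ZMod p] GF p m × GF p m) ×
      ((GF p m × GF p m) ≃ₗ[ZMod p] GF p m × GF p m)

/-- The autotopism group of a multiplication on `F × F`, as a subgroup of `G3`. -/
def autGroup (p m : ℕ) [Fact p.Prime]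
    (mul : GF p m × GF p m → GF p m × GF p m → GF p m × GF p m) : Subgroup (G3 p m) where
  carrier := {t | ∀ w z, t.1 (mul w z) = mul (t.2.1 w) (t.2.2 z)}
  one_mem' := by intro w z; rfl
  mul_mem' := by
    intro s t hs ht w z
    have h1 : (s * t).1 (mul w z) = s.1 (t.1 (mul w z)) := rfl
    have h2 : ∀ w' z', mul ((s * t).2.1 w') ((s * t).2.2 z')
        = mul (s.2.1 (t.2.1 w')) (s.2.2 (t.2.2 z')) := fun _ _ => rfl
    rw [h1, h2, ht, hs]
  inv_mem' := by
    intro t ht w z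
    have := ht (t.2.1⁻¹ w) (t.2.2⁻¹ z)
    have h1 : t.2.1 (t.2.1⁻¹ w) = w := t.2.1.apply_symm_apply w
    have h2 : t.2.2 (t.2.2⁻¹ z) = z := t.2.2.apply_symm_apply z
    rw [h1, h2] at this
    have h3 : t⁻¹.1 (mul w z) = t.1⁻¹ (mul w z) := rfl
    rw [h3, ← this]
    exact t.1.symm_apply_apply _

/-- The subgroup `Z^{(q)} = {γ_r : r ∈ F^*}` of `G3`. -/
def Zgroup (p m : ℕ) [Fact p.Prime] (q : ℕ) : Subgroup (G3 p m) where
  carrier := {t | ∃ r : GF p m, r ≠ 0 ∧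
    (∀ w : GF p m × GF p m, t.1 w = (r ^ (q + 1) * w.1, r ^ (q ^ 2 + 1) * w.2)) ∧
    (∀ w : GF p m × GF p m, t.2.1 w = (r * w.1, r * w.2)) ∧
    (∀ w : GF p m × GF p m, t.2.2 w = (r * w.1, r * w.2))}
  one_mem' := ⟨1, one_ne_zero, fun w => by simp, fun w => by simp, fun w => by simp⟩
  mul_mem' := by
    rintro s t ⟨r₁, hr₁, hN₁, hL₁, hM₁⟩ ⟨r₂, hr₂, hN₂, hL₂, hM₂⟩
    refine ⟨r₁ * r₂, mul_ne_zero hr₁ hr₂, fun w => ?_, fun w => ?_, fun w => ?_⟩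
    · show s.1 (t.1 w) = _
      rw [hN₂, hN₁]
      simp [Prod.ext_iff, mul_pow]
      constructor <;> ring
    · show s.2.1 (t.2.1 w) = _
      rw [hL₂, hL₁]
      simp [Prod.ext_iff]
      constructor <;> ring
    · show s.2.2 (t.2.2 w) = _
      rw [hM₂, hM₁]
      simp [Prod.ext_iff]
      constructor <;> ring
  inv_mem' := by
    rintro t ⟨r, hr, hN, hL, hM⟩
    refine ⟨r⁻¹, inv_ne_zero hr, fun w => ?_, fun w => ?_, fun w => ?_⟩
    · have key : t.1 (r⁻¹ ^ (q + 1) * w.1, r⁻¹ ^ (q ^ 2 + 1) * w.2) = w := by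
        rw [hN]
        simp [Prod.ext_iff, ← mul_assoc, ← mul_pow, mul_inv_cancel₀ hr]
        constructor <;> rw [mul_inv_cancel₀ (pow_ne_zero _ hr), one_mul]
      show t.1⁻¹ w = _
      have : (t.1⁻¹ : _) w = t.1.symm w := rfl
      rw [this, LinearEquiv.symm_apply_eq, key]
    · have key : t.2.1 (r⁻¹ * w.1, r⁻¹ * w.2) = w := by
        rw [hL]
        simp [Prod.ext_iff, ← mul_assoc, mul_inv_cancel₀ hr]
      show t.2.1⁻¹ w = _
      have : (t.2.1⁻¹ : _) w = t.2.1.symm w := rfl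
      rw [this, LinearEquiv.symm_apply_eq, key]
    · have key : t.2.2 (r⁻¹ * w.1, r⁻¹ * w.2) = w := by
        rw [hM]
        simp [Prod.ext_iff, ← mul_assoc, mul_inv_cancel₀ hr]
      show t.2.2⁻¹ w = _
      have : (t.2.2⁻¹ : _) w = t.2.2.symm w := rfl
      rw [this, LinearEquiv.symm_apply_eq, key]

/-- The subgroup `Z_R^{(q)} = {γ_r : r ∈ R}` of `G3`, where `R` is the Sylow
`p'`-subgroup of `F^*` (the elements whose order is a power of the prime `p'`). -/
def ZRgroup (p m : ℕ) [Fact p.Prime] (q p' : ℕ) (hp' : p'.Prime) : Subgroup (G3 p m) where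
  carrier := {t | ∃ r : GF p m, r ≠ 0 ∧ (∃ j : ℕ, orderOf r = p' ^ j) ∧
    (∀ w : GF p m × GF p m, t.1 w = (r ^ (q + 1) * w.1, r ^ (q ^ 2 + 1) * w.2)) ∧
    (∀ w : GF p m × GF p m, t.2.1 w = (r * w.1, r * w.2)) ∧
    (∀ w : GF p m × GF p m, t.2.2 w = (r * w.1, r * w.2))}
  one_mem' := ⟨1, one_ne_zero, ⟨0, by simp⟩, fun w => by simp, fun w => by simp,
    fun w => by simp⟩
  mul_mem' := by
    rintro s t ⟨r₁, hr₁, ⟨j₁, hj₁⟩, hN₁, hL₁, hM₁⟩ ⟨r₂, hr₂, ⟨j₂, hj₂⟩, hN₂, hL₂, hM₂⟩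
    have hcomm : Commute r₁ r₂ := mul_comm r₁ r₂
    have hdvd : orderOf (r₁ * r₂) ∣ p' ^ max j₁ j₂ := by
      refine hcomm.orderOf_mul_dvd_lcm.trans ?_
      rw [hj₁, hj₂]
      exact Nat.lcm_dvd (pow_dvd_pow _ (le_max_left _ _)) (pow_dvd_pow _ (le_max_right _ _))
    obtain ⟨j, _, hjeq⟩ := (Nat.dvd_prime_pow hp').1 hdvd
    refine ⟨r₁ * r₂, mul_ne_zero hr₁ hr₂, ⟨j, hjeq⟩, fun w => ?_, fun w => ?_, fun w => ?_⟩
    · show s.1 (t.1 w) = _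
      rw [hN₂, hN₁]
      simp [Prod.ext_iff, mul_pow]
      constructor <;> ring
    · show s.2.1 (t.2.1 w) = _
      rw [hL₂, hL₁]
      simp [Prod.ext_iff]
      constructor <;> ring
    · show s.2.2 (t.2.2 w) = _
      rw [hM₂, hM₁]
      simp [Prod.ext_iff]
      constructor <;> ring
  inv_mem' := by
    rintro t ⟨r, hr, ⟨j, hj⟩, hN, hL, hM⟩
    have hord : orderOf r⁻¹ = orderOf r := by
      have h1 : ((Units.mk0 r hr)⁻¹ : GF p m) = r⁻¹ := rfl
      rw [← h1, ← Units.val_inv_eq_inv_val, orderOf_units, orderOf_inv, ← orderOf_units,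
        Units.val_mk0]
    refine ⟨r⁻¹, inv_ne_zero hr, ⟨j, by rw [hord, hj]⟩, fun w => ?_, fun w => ?_,
      fun w => ?_⟩
    · have key : t.1 (r⁻¹ ^ (q + 1) * w.1, r⁻¹ ^ (q ^ 2 + 1) * w.2) = w := by
        rw [hN]
        simp [Prod.ext_iff, ← mul_assoc, ← mul_pow, mul_inv_cancel₀ hr]
        constructor <;> rw [mul_inv_cancel₀ (pow_ne_zero _ hr), one_mul]
      show t.1⁻¹ w = _
      have : (t.1⁻¹ : _) w = t.1.symm w := rfl
      rw [this, LinearEquiv.symm_apply_eq, key]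
    · have key : t.2.1 (r⁻¹ * w.1, r⁻¹ * w.2) = w := by
        rw [hL]
        simp [Prod.ext_iff, ← mul_assoc, mul_inv_cancel₀ hr]
      show t.2.1⁻¹ w = _
      have : (t.2.1⁻¹ : _) w = t.2.1.symm w := rfl
      rw [this, LinearEquiv.symm_apply_eq, key]
    · have key : t.2.2 (r⁻¹ * w.1, r⁻¹ * w.2) = w := by
        rw [hM]
        simp [Prod.ext_iff, ← mul_assoc, mul_inv_cancel₀ hr]
      show t.2.2⁻¹ w = _
      have : (t.2.2⁻¹ : _) w = t.2.2.symm w := rfl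
      rw [this, LinearEquiv.symm_apply_eq, key]

/-! Every `γ_r` is an autotopism, so `Z_R^{(q)}` is a `p'`-subgroup of `Aut(P)`; it is a Sylow
`p'`-subgroup of `Z^{(q)} ≅ F^*`, so by `p' ∤ I` it is a normal Sylow `p'`-subgroup of the
centralizer `C`. Since `[N(Z_R) : Z_R] ≡ [Aut(P) : Z_R] (mod p')`, it suffices that every
`p'`-element `g` normalizing `Z_R` lies in `Z_R`, i.e. in `C`. Conjugation by `g` sends `γ_u` to
some `γ_{u'}`, and its `L`-component conjugates multiplication by `u` on `F × F` into
multiplication by `u'`; so `u` and `u'` have the same minimal polynomial over `F_p`, and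
`u' = u ^ p ^ i`. Iterating, `u ^ p ^ (i n) = u` both for `n = ord g`, a power of `p'`, and for
`n = m`. A primitive divisor satisfies `m ∣ p' - 1`, so these are coprime, whence `u' = u`. -/

instance {R M M₂ : Type*} [Semiring R] [AddCommMonoid M] [AddCommMonoid M₂] [Module R M]
    [Module R M₂] [Finite M] [Finite M₂] : Finite (M ≃ₗ[R] M₂) :=
  FunLike.finite _

section GroupTheory

variable {G : Type*} [Group G] {p : ℕ}

theorem conj_pow_eq_pow_pow {g x : G} {N : ℕ} (h : g * x * g⁻¹ = x ^ N) (n : ℕ) :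
    g ^ n * x * (g ^ n)⁻¹ = x ^ N ^ n := by
  induction n with
  | zero => simp
  | succ n ih =>
    calc g ^ (n + 1) * x * (g ^ (n + 1))⁻¹ = g * (g ^ n * x * (g ^ n)⁻¹) * g⁻¹ := by group
      _ = (g * x * g⁻¹) ^ N ^ n := by rw [ih, conj_pow]
      _ = x ^ N ^ (n + 1) := by rw [h, ← pow_mul, pow_succ']

theorem Commute.of_conj_eq_pow {g x : G} {N k : ℕ} (h : g * x * g⁻¹ = x ^ N)
    (hx : x ^ N ^ k = x) (hcop : (orderOf g).Coprime k) : Commute g x := by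
  have hg : Function.IsPeriodicPt (· ^ N) (orderOf g) x := by
    have := conj_pow_eq_pow_pow h (orderOf g)
    rw [pow_orderOf_eq_one, one_mul, inv_one, mul_one] at this
    rw [Function.IsPeriodicPt, Function.IsFixedPt, pow_iterate]
    exact this.symm
  have hk : Function.IsPeriodicPt (· ^ N) k x := by
    rw [Function.IsPeriodicPt, Function.IsFixedPt, pow_iterate]
    exact hx
  have h1 := hg.gcd hk
  rw [hcop.gcd_eq_one, Function.IsPeriodicPt, Function.IsFixedPt, Function.iterate_one] at h1
  rw [commute_iff_eq, ← mul_inv_eq_iff_eq_mul, h, h1]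

variable [Fact p.Prime]

theorem IsPGroup.mem_of_normal {P : Subgroup G} [P.Normal] (hP : IsPGroup p P)
    (hindex : ¬ p ∣ P.index) {g : G} (hg : ∃ n, g ^ p ^ n = 1) : g ∈ P := by
  obtain ⟨n, hn⟩ := hg
  have hg' : IsPGroup p (Subgroup.zpowers g) := by
    obtain ⟨j, -, hj⟩ := (Nat.dvd_prime_pow Fact.out).1 (orderOf_dvd_of_pow_eq_one hn)
    exact .of_card (by rw [Nat.card_zpowers, hj])
  have hsup := (hP.toSylow hindex).is_maximal' (hP.to_sup_of_normal_left hg') le_sup_left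
  rw [IsPGroup.toSylow_coe] at hsup
  exact hsup.le (Subgroup.mem_sup_right (Subgroup.mem_zpowers g))

variable [Finite G]

theorem not_dvd_index_of_forall_pow_prime_pow_eq_one_mem {H : Subgroup G}
    (h : ∀ g : G, (∃ n, g ^ p ^ n = 1) → g ∈ H) : ¬ p ∣ H.index := by
  obtain ⟨P⟩ := Sylow.nonempty (p := p) (G := G)
  have hPH : (P : Subgroup G) ≤ H := fun g hg => h g (P.isPGroup' ⟨g, hg⟩ |>.imp
    fun n hn => by simpa using congrArg Subtype.val hn)
  exact fun hdvd => P.not_dvd_index' Subgroup.index_ne_zero_of_finite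
    (hdvd.trans (Subgroup.index_dvd_of_le hPH))

theorem IsPGroup.not_dvd_index_of_forall_mem_normalizer {P : Subgroup G} (hP : IsPGroup p P)
    (h : ∀ g ∈ Subgroup.normalizer (P : Set G), (∃ n, g ^ p ^ n = 1) → g ∈ P) :
    ¬ p ∣ P.index := by
  obtain ⟨n, hn⟩ := hP.exists_card_eq
  have hN : ¬ p ∣ (P.subgroupOf (Subgroup.normalizer (P : Set G))).index :=
    not_dvd_index_of_forall_pow_prime_pow_eq_one_mem fun g ⟨k, hk⟩ =>
      Subgroup.mem_subgroupOf.mpr (h g g.2 ⟨k, by simpa using congrArg Subtype.val hk⟩)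
  exact fun hdvd =>
    hN (((Sylow.card_quotient_normalizer_modEq_card_quotient hn).dvd_iff dvd_rfl).2 hdvd)

end GroupTheory

theorem minpoly_eq_of_linearEquiv_conj {K A V : Type*} [CommRing K] [Ring A] [Algebra K A]
    [AddCommGroup V] [Module K V] [Module A V] [IsScalarTower K A V] [FaithfulSMul A V]
    (e : V ≃ₗ[K] V) {r r' : A} (h : ∀ x, e (r • x) = r' • e x) :
    minpoly K r' = minpoly K r := by
  have hinj : Function.Injective (Algebra.lsmul K K V : A →ₐ[K] Module.End K V) :=
    fun a b hab => FaithfulSMul.eq_of_smul_eq_smul fun x => LinearMap.congr_fun hab x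
  have hconj : Algebra.lsmul K K V r' = e.conjAlgEquiv K (Algebra.lsmul K K V r) := by
    ext x
    simp [h]
  rw [← minpoly.algHom_eq _ hinj, hconj, minpoly.algEquiv_eq, minpoly.algHom_eq _ hinj]

theorem FiniteField.exists_eq_pow_of_minpoly_eq {K L : Type*} [Field K] [Fintype K] [Field L]
    [Finite L] [Algebra K L] {x y : L} (h : minpoly K x = minpoly K y) :
    ∃ i, x = y ^ Fintype.card K ^ i := by
  obtain ⟨σ, rfl⟩ := (Normal.minpoly_eq_iff_mem_orbit L).mp h
  obtain ⟨i, rfl⟩ := (bijective_frobeniusAlgEquivOfAlgebraic_pow K L).2 σ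
  exact ⟨i, by simp [AlgEquiv.coe_pow, coe_frobeniusAlgEquivOfAlgebraic_iterate]⟩

theorem IsPrimitiveDivisor.not_dvd {p m p' : ℕ} (hp : 0 < p) (hm : m ≠ 0)
    (hp' : IsPrimitiveDivisor p m p') : ¬ p' ∣ m := by
  obtain ⟨hp'prime, hdvd, hmin⟩ := hp'
  have := Fact.mk hp'prime
  have hcast : ∀ j, p' ∣ p ^ j - 1 ↔ (p : ZMod p') ^ j = 1 := fun j => by
    rw [← ZMod.natCast_eq_zero_iff, Nat.cast_sub (Nat.one_le_pow _ _ hp), Nat.cast_pow,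
      Nat.cast_one, sub_eq_zero]
  have hord : orderOf (p : ZMod p') = m :=
    (orderOf_eq_iff (Nat.pos_of_ne_zero hm)).2 ⟨(hcast m).1 hdvd,
      fun j hjm hj => mt (hcast j).2 (hmin j hj hjm)⟩
  have hp0 : (p : ZMod p') ≠ 0 := fun h0 => by
    simpa [h0, zero_pow hm] using (hcast m).1 hdvd
  have hmp' : m < p' := by
    have := Nat.le_of_dvd (Nat.sub_pos_of_lt hp'prime.one_lt)
      (hord ▸ ZMod.orderOf_dvd_card_sub_one hp0)
    omega
  exact fun h => absurd (Nat.le_of_dvd (Nat.pos_of_ne_zero hm) h) (by omega)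

section Gamma

variable (p m : ℕ) [Fact p.Prime]

def prodScale (s t : (GF p m)ˣ) : (GF p m × GF p m) ≃ₗ[ZMod p] GF p m × GF p m where
  toFun w := (s * w.1, t * w.2)
  invFun w := (↑s⁻¹ * w.1, ↑t⁻¹ * w.2)
  map_add' w₁ w₂ := by simp only [Prod.fst_add, Prod.snd_add, mul_add, Prod.mk_add_mk]
  map_smul' c w := by simp
  left_inv w := by simp
  right_inv w := by simp

@[simp] lemma prodScale_apply (s t : (GF p m)ˣ) (w : GF p m × GF p m) :
    prodScale p m s t w = (s * w.1, t * w.2) := rfl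

def gammaHom (q : ℕ) : (GF p m)ˣ →* G3 p m where
  toFun r :=
    (prodScale p m (r ^ (q + 1)) (r ^ (q ^ 2 + 1)), prodScale p m r r, prodScale p m r r)
  map_one' := by ext <;> simp
  map_mul' r s := by ext <;> simp [LinearEquiv.mul_apply, mul_pow, mul_assoc]

variable {p m}

lemma gammaHom_injective (q : ℕ) : Function.Injective (gammaHom p m q) := fun r s h =>
  Units.ext (by simpa [gammaHom] using congrArg (fun t : G3 p m => (t.2.1 (1, 0)).1) h)

lemma eq_gammaHom_iff {q : ℕ} {t : G3 p m} {u : (GF p m)ˣ} :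
    t = gammaHom p m q u ↔
      (∀ w, t.1 w = ((u : GF p m) ^ (q + 1) * w.1, (u : GF p m) ^ (q ^ 2 + 1) * w.2)) ∧
      (∀ w, t.2.1 w = (u * w.1, u * w.2)) ∧ (∀ w, t.2.2 w = (u * w.1, u * w.2)) := by
  constructor
  · rintro rfl
    exact ⟨fun w => by simp [gammaHom], fun w => rfl, fun w => rfl⟩
  · rintro ⟨hN, hL, hM⟩
    ext w <;> simp [gammaHom, hN, hL, hM]

lemma mem_Zgroup_iff {q : ℕ} {t : G3 p m} :
    t ∈ Zgroup p m q ↔ ∃ u : (GF p m)ˣ, gammaHom p m q u = t :=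
  ⟨fun ⟨r, hr, h⟩ => ⟨Units.mk0 r hr, (eq_gammaHom_iff.2 h).symm⟩,
    fun ⟨u, hu⟩ => ⟨u, u.ne_zero, eq_gammaHom_iff.1 hu.symm⟩⟩

lemma mem_ZRgroup_iff {q p' : ℕ} {hp' : p'.Prime} {t : G3 p m} :
    t ∈ ZRgroup p m q p' hp' ↔
      ∃ u : (GF p m)ˣ, (∃ j, orderOf u = p' ^ j) ∧ gammaHom p m q u = t :=
  ⟨fun ⟨r, hr, hord, h⟩ => ⟨Units.mk0 r hr, by simpa [← orderOf_units] using hord,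
      (eq_gammaHom_iff.2 h).symm⟩,
    fun ⟨u, hord, hu⟩ => ⟨u, u.ne_zero, by simpa [orderOf_units] using hord,
      eq_gammaHom_iff.1 hu.symm⟩⟩

lemma ZRgroup_le_Zgroup (q p' : ℕ) (hp' : p'.Prime) : ZRgroup p m q p' hp' ≤ Zgroup p m q :=
  fun _ ⟨r, hr, _, h⟩ => ⟨r, hr, h⟩

lemma Zgroup_le_autGroup (q : ℕ) (α a b : GF p m) :
    Zgroup p m q ≤ autGroup p m (taniMul p m q α a b) := by
  rintro t ⟨r, -, hN, hL, hM⟩ w z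
  rw [hN, hL, hM]
  simp only [taniMul, Prod.ext_iff, mul_pow]
  constructor <;> ring

lemma isPGroup_ZRgroup (q p' : ℕ) (hp' : p'.Prime) : IsPGroup p' (ZRgroup p m q p' hp') := by
  rintro ⟨t, ht⟩
  obtain ⟨u, ⟨j, hj⟩, rfl⟩ := mem_ZRgroup_iff.1 ht
  exact ⟨j, Subtype.ext (by simp [← map_pow, ← hj, pow_orderOf_eq_one])⟩

lemma not_dvd_relIndex_ZRgroup_Zgroup (q p' : ℕ) (hp' : p'.Prime) :
    ¬ p' ∣ (ZRgroup p m q p' hp').relIndex (Zgroup p m q) := by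
  have := Fact.mk hp'
  refine not_dvd_index_of_forall_pow_prime_pow_eq_one_mem fun ⟨t, ht⟩ ⟨n, hn⟩ =>
    Subgroup.mem_subgroupOf.2 ?_
  obtain ⟨u, rfl⟩ := mem_Zgroup_iff.1 ht
  have hu : u ^ p' ^ n = 1 :=
    gammaHom_injective q (by simpa using congrArg Subtype.val hn)
  obtain ⟨j, -, hj⟩ := (Nat.dvd_prime_pow hp').1 (orderOf_dvd_of_pow_eq_one hu)
  exact mem_ZRgroup_iff.2 ⟨u, ⟨j, hj⟩, rfl⟩

end Gamma

theorem commute_of_conj_mem_Zgroup {p m q : ℕ} [Fact p.Prime] (hm : m ≠ 0) {g γ : G3 p m}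
    (hcop : (orderOf g).Coprime m) (hγ : γ ∈ Zgroup p m q)
    (hgγ : g * γ * g⁻¹ ∈ Zgroup p m q) :
    Commute g γ := by
  obtain ⟨u, rfl⟩ := mem_Zgroup_iff.1 hγ
  obtain ⟨u', hu'⟩ := mem_Zgroup_iff.1 hgγ
  have hL : ∀ x, g.2.1 ((u : GF p m) • x) = (u' : GF p m) • g.2.1 x := fun x => by
    simpa [gammaHom, LinearEquiv.mul_apply, Prod.smul_def] using
      congrArg (fun t : G3 p m => t.2.1 x) (eq_mul_inv_iff_mul_eq.1 hu').symm
  obtain ⟨i, hi⟩ := FiniteField.exists_eq_pow_of_minpoly_eq (K := ZMod p)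
    (minpoly_eq_of_linearEquiv_conj g.2.1 hL)
  have hconj : g * gammaHom p m q u * g⁻¹ = gammaHom p m q u ^ p ^ i := by
    rw [← hu', ← map_pow]
    exact congrArg _ (Units.ext (by simpa using hi))
  refine Commute.of_conj_eq_pow hconj ?_ hcop
  rw [← map_pow]
  refine congrArg _ (Units.ext ?_)
  have := Fintype.ofFinite (GF p m)
  rw [Units.val_pow_eq_pow_val, ← pow_mul, mul_comm, pow_mul, ← GaloisField.card p m hm,
    Nat.card_eq_fintype_card, FiniteField.pow_card_pow]

theorem ZR_is_sylow_general (p m k p' I : ℕ) [Fact p.Prime] (hm : 0 < m)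
    (α a b : GF p m)
    (hp' : IsPrimitiveDivisor p m p')
    (C : Subgroup (G3 p m))
    (hC : C = Subgroup.centralizer (ZRgroup p m (p ^ k) p' hp'.1 : Set (G3 p m)) ⊓
      autGroup p m (taniMul p m (p ^ k) α a b))
    (hZC : Zgroup p m (p ^ k) ≤ C)
    (hI : (Zgroup p m (p ^ k)).relIndex C = I)
    (hpI : ¬ p' ∣ I) :
    ZRgroup p m (p ^ k) p' hp'.1 ≤ autGroup p m (taniMul p m (p ^ k) α a b) ∧
    IsPGroup p' ((ZRgroup p m (p ^ k) p' hp'.1).subgroupOf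
        (autGroup p m (taniMul p m (p ^ k) α a b))) ∧
    ¬ p' ∣ ((ZRgroup p m (p ^ k) p' hp'.1).subgroupOf
        (autGroup p m (taniMul p m (p ^ k) α a b))).index := by
  have := Fact.mk hp'.1
  set A := autGroup p m (taniMul p m (p ^ k) α a b)
  set ZR := ZRgroup p m (p ^ k) p' hp'.1
  have hZRZ : ZR ≤ Zgroup p m (p ^ k) := ZRgroup_le_Zgroup _ _ _
  have hZRA : ZR ≤ A := hZRZ.trans (Zgroup_le_autGroup _ α a b)
  have hZRC : ZR ≤ C := hZRZ.trans hZC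
  have hpgroup {H : Subgroup (G3 p m)} : IsPGroup p' (ZR.subgroupOf H) :=
    (isPGroup_ZRgroup _ _ _).comap_of_injective _ H.subtype_injective
  have hindexC : ¬ p' ∣ (ZR.subgroupOf C).index := by
    rw [← Subgroup.relIndex, ← Subgroup.relIndex_mul_relIndex ZR _ C hZRZ hZC, hI]
    exact Nat.Prime.not_dvd_mul hp'.1 (not_dvd_relIndex_ZRgroup_Zgroup _ _ _) hpI
  have : (ZR.subgroupOf C).Normal := (Subgroup.normal_subgroupOf_iff_le_normalizer hZRC).2
    (hC ▸ inf_le_left.trans (Subgroup.centralizer_le_normalizer _))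
  refine ⟨hZRA, hpgroup,
    hpgroup.not_dvd_index_of_forall_mem_normalizer fun g hg ⟨n, hn⟩ => ?_⟩
  rw [← Subgroup.subgroupOf_normalizer_eq hZRA, Subgroup.mem_subgroupOf,
    Subgroup.mem_normalizer_iff] at hg
  have hgn : (g : G3 p m) ^ p' ^ n = 1 := by simpa using congrArg Subtype.val hn
  have hcop : (orderOf (g : G3 p m)).Coprime m :=
    .coprime_dvd_left (orderOf_dvd_of_pow_eq_one hgn) (.pow_left n
      ((Nat.Prime.coprime_iff_not_dvd hp'.1).2 (hp'.not_dvd (Fact.out : p.Prime).pos hm.ne')))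
  have hgC : (g : G3 p m) ∈ C := hC ▸ ⟨Subgroup.mem_centralizer_iff.2 fun γ hγ =>
    (commute_of_conj_mem_Zgroup hm.ne' hcop (hZRZ hγ) (hZRZ ((hg γ).1 hγ))).eq.symm, g.2⟩
  exact Subgroup.mem_subgroupOf.2 (Subgroup.mem_subgroupOf.1
    (hpgroup.mem_of_normal hindexC (g := ⟨g, hgC⟩) ⟨n, Subtype.ext (by simpa using hgn)⟩))

/-- Lemma 5: if the centralizer of `Z_R^{(q)}` in `Aut(P)` contains `Z^{(q)}` with
index `I` not divisible by `p'`, then `Z_R^{(q)}` is a Sylow `p'`-subgroup of `Aut(P)`. -/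
theorem ZR_is_sylow (p m k p' I : ℕ) [Fact p.Prime] (hm : 0 < m)
    (hk1 : 1 ≤ k) (hk2 : k ≤ m - 1) (α a b : GF p m)
    (htani : IsTaniguchiParam p m (p ^ k) α a b)
    (hp' : IsPrimitiveDivisor p m p')
    (C : Subgroup (G3 p m))
    (hC : C = Subgroup.centralizer (ZRgroup p m (p ^ k) p' hp'.1 : Set (G3 p m)) ⊓
      autGroup p m (taniMul p m (p ^ k) α a b))
    (hZC : Zgroup p m (p ^ k) ≤ C)
    (hI : (Zgroup p m (p ^ k)).relIndex C = I)
    (hpI : ¬ p' ∣ I) :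
    ZRgroup p m (p ^ k) p' hp'.1 ≤ autGroup p m (taniMul p m (p ^ k) α a b) ∧
    IsPGroup p' ((ZRgroup p m (p ^ k) p' hp'.1).subgroupOf
        (autGroup p m (taniMul p m (p ^ k) α a b))) ∧
    ¬ p' ∣ ((ZRgroup p m (p ^ k) p' hp'.1).subgroupOf
        (autGroup p m (taniMul p m (p ^ k) α a b))).index :=
  ZR_is_sylow_general p m k p' I hm α a b hp' C hC hZC hI hpI
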